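/- Let φ be a 3CNF formula with k clauses encoded by f(x) = -∑_{j=1}^k s(l_{j,1}(x)+l_{j,2}(x)+l_{j,3}(x)). If there exists x ∈ {0,1}^m with f(x) ≤ -k, then the Boolean assignment corresponding to x satisfies φ. -/
import Mathlib


noncomputable def ReLU (x : ℝ) : ℝ := max x 0

noncomputable def s (x : ℝ) : ℝ := ReLU x - ReLU (x - 1)

noncomputable def litEnc {m : ℕ} (L : Fin m × Bool) (x : Fin m → ℝ) : ℝ :=
  if L.2 then x L.1 else 1 - x L.1

noncomputable def netF {m k : ℕ} (C : Fin k → Fin 3 → Fin m × Bool) (x : Fin m → ℝ) : ℝ :=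
  -(∑ j : Fin k, s (litEnc (C j 0) x + litEnc (C j 1) x + litEnc (C j 2) x))

lemma s_le_one (t : ℝ) : s t ≤ 1 := by
  unfold s ReLU
  rcases le_total t 0 with h | h
  · rw [max_eq_right h, max_eq_right (by linarith)]; norm_num
  · rcases le_total t 1 with h1 | h1
    · rw [max_eq_left h, max_eq_right (by linarith)]; linarith
    · rw [max_eq_left h, max_eq_left (by linarith)]; linarith

lemma lit01 {m : ℕ} (L : Fin m × Bool) (x : Fin m → ℝ) (hx : ∀ i, x i = 0 ∨ x i = 1) :
    litEnc L x = 0 ∨ litEnc L x = 1 := by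
  unfold litEnc
  rcases hx L.1 with h | h <;> cases L.2 <;> simp [h]

theorem stmt_7 (m k : ℕ) (C : Fin k → Fin 3 → Fin m × Bool)
    (x : Fin m → ℝ) (hx : ∀ i, x i = 0 ∨ x i = 1)
    (hf : netF C x ≤ -(k : ℝ)) :
    ∀ j : Fin k, ∃ r : Fin 3,
      (if (C j r).2 then x (C j r).1 = 1 else x (C j r).1 = 0) := by
  intro j
  -- from hf: every summand equals 1 (each ≤ 1, sum ≥ k)
  have hsum : (k : ℝ) ≤ ∑ j : Fin k, s (litEnc (C j 0) x + litEnc (C j 1) x + litEnc (C j 2) x) := by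
    unfold netF at hf; linarith
  have hall : ∀ i : Fin k, s (litEnc (C i 0) x + litEnc (C i 1) x + litEnc (C i 2) x) = 1 := by
    by_contra h
    push_neg at h
    obtain ⟨i, hi⟩ := h
    have hlt : s (litEnc (C i 0) x + litEnc (C i 1) x + litEnc (C i 2) x) < 1 :=
      lt_of_le_of_ne (s_le_one _) hi
    have := Finset.sum_lt_sum (f := fun i : Fin k =>
        s (litEnc (C i 0) x + litEnc (C i 1) x + litEnc (C i 2) x)) (g := fun _ => (1:ℝ))
      (fun i _ => s_le_one _) ⟨i, Finset.mem_univ i, hlt⟩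
    simp at this
    linarith
  have hj := hall j
  -- some literal is 1
  have hgoal : litEnc (C j 0) x = 1 ∨ litEnc (C j 1) x = 1 ∨ litEnc (C j 2) x = 1 := by
    by_contra h
    push_neg at h
    have h0 := (lit01 (C j 0) x hx).resolve_right h.1
    have h1 := (lit01 (C j 1) x hx).resolve_right h.2.1
    have h2 := (lit01 (C j 2) x hx).resolve_right h.2.2
    rw [h0, h1, h2] at hj
    norm_num [s, ReLU] at hj
  have key : ∀ r : Fin 3, litEnc (C j r) x = 1 →
      (if (C j r).2 then x (C j r).1 = 1 else x (C j r).1 = 0) := by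
    intro r hr
    unfold litEnc at hr
    cases hC : (C j r).2 <;> simp [hC] at hr ⊢ <;> linarith
  rcases hgoal with h | h | h
  exacts [⟨0, key 0 h⟩, ⟨1, key 1 h⟩, ⟨2, key 2 h⟩]
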